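/- arXiv:1205.2268 — 5 statements merged into one kernel-verified Lean document; each statement's English description precedes it below -/
import Mathlib

section
/- Let H be a complex Hilbert space and let E and F be orthogonal projections on H such that the operator norm ‖F∘E‖ < 1. Then for every f ∈ H, ‖f‖² ≤ (1 − ‖F∘E‖)^{−2} ( ‖f − Ef‖² + ‖f − Ff‖² ). -/
open scoped InnerProductSpace ComplexConjugate
open RCLike ContinuousLinearMap

/-- If `E` and `F` are orthogonal projections on a complex Hilbert space with
`‖F ∘ E‖ < 1`, then `‖f‖² ≤ (1 − ‖F∘E‖)⁻² (‖f − Ef‖² + ‖f − Ff‖²)` for all `f`. -/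
theorem strong_annihilation_of_projections
    {H : Type*} [NormedAddCommGroup H] [InnerProductSpace ℂ H] [CompleteSpace H]
    (E F : H →L[ℂ] H)
    (hEidem : E ∘L E = E) (hEsa : IsSelfAdjoint E)
    (hFidem : F ∘L F = F) (hFsa : IsSelfAdjoint F)
    (hnorm : ‖F ∘L E‖ < 1) (f : H) :
    ‖f‖^2 ≤ ((1 - ‖F ∘L E‖)⁻¹)^2 * (‖f - E f‖^2 + ‖f - F f‖^2) := by
  set c := ‖F ∘L E‖ with hc
  have hc0 : 0 ≤ c := norm_nonneg _
  have hE2 : ∀ x : H, E (E x) = E x := fun x => DFunLike.congr_fun hEidem x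
  have hF2 : ∀ x : H, F (F x) = F x := fun x => DFunLike.congr_fun hFidem x
  have hEip : ∀ x y : H, ⟪E x, y⟫_ℂ = ⟪x, E y⟫_ℂ := fun x y => by
    conv_lhs => rw [← hEsa.adjoint_eq]
    exact ContinuousLinearMap.adjoint_inner_left E y x
  have hFip : ∀ x y : H, ⟪F x, y⟫_ℂ = ⟪x, F y⟫_ℂ := fun x y => by
    conv_lhs => rw [← hFsa.adjoint_eq]
    exact ContinuousLinearMap.adjoint_inner_left F y x
  -- re ⟪f, E f⟫ = ‖E f‖²
  have hreE : re ⟪f, E f⟫_ℂ = ‖E f‖^2 := by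
    have : ⟪f, E f⟫_ℂ = ⟪E f, E f⟫_ℂ := by
      rw [hEip f (E f)]; rw [hE2]
    rw [this, inner_self_eq_norm_sq]
  have hreF : re ⟪f, F f⟫_ℂ = ‖F f‖^2 := by
    have : ⟪f, F f⟫_ℂ = ⟪F f, F f⟫_ℂ := by
      rw [hFip f (F f)]; rw [hF2]
    rw [this, inner_self_eq_norm_sq]
  -- Pythagoras
  have hPE : ‖f - E f‖^2 = ‖f‖^2 - ‖E f‖^2 := by
    rw [@norm_sub_sq ℂ, hreE]; ring
  have hPF : ‖f - F f‖^2 = ‖f‖^2 - ‖F f‖^2 := by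
    rw [@norm_sub_sq ℂ, hreF]; ring
  set p := ‖E f‖ with hp
  set q := ‖F f‖ with hq
  set N := ‖f‖ with hN
  -- step: p² + q² ≤ ‖E f + F f‖ * N
  have h1 : p^2 + q^2 ≤ ‖E f + F f‖ * N := by
    have : p^2 + q^2 = re ⟪E f + F f, f⟫_ℂ := by
      rw [inner_add_left, map_add]
      have e1 : re ⟪E f, f⟫_ℂ = p^2 := by
        rw [← inner_conj_symm, conj_re (K := ℂ), hreE]
      have e2 : re ⟪F f, f⟫_ℂ = q^2 := by
        rw [← inner_conj_symm, conj_re (K := ℂ), hreF]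
      rw [e1, e2]
    rw [this]
    calc re ⟪E f + F f, f⟫_ℂ ≤ ‖⟪E f + F f, f⟫_ℂ‖ := re_le_norm _
      _ ≤ ‖E f + F f‖ * N := norm_inner_le_norm _ _
  -- step: cross term bound
  have hcross : re ⟪E f, F f⟫_ℂ ≤ c * p * q := by
    have key : ⟪E f, F f⟫_ℂ = ⟪F (E f), F f⟫_ℂ := by
      conv_lhs => rw [← hF2 f, ← hFip]
    have hFE : ‖F (E f)‖ ≤ c * p := by
      have := (F ∘L E).le_opNorm (E f)
      simpa [ContinuousLinearMap.comp_apply, hE2] using this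
    calc re ⟪E f, F f⟫_ℂ ≤ ‖⟪E f, F f⟫_ℂ‖ := re_le_norm _
      _ = ‖⟪F (E f), F f⟫_ℂ‖ := by rw [key]
      _ ≤ ‖F (E f)‖ * q := norm_inner_le_norm _ _
      _ ≤ (c * p) * q := by
          apply mul_le_mul_of_nonneg_right hFE (norm_nonneg _)
  have h2 : ‖E f + F f‖^2 ≤ p^2 + q^2 + 2 * (c * p * q) := by
    rw [@norm_add_sq ℂ]
    nlinarith [hcross]
  -- 2cpq ≤ c(p²+q²)
  have h3 : 2 * (c * p * q) ≤ c * (p^2 + q^2) := by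
    nlinarith [sq_nonneg (p - q), hc0]
  have hRsq : ‖E f + F f‖^2 ≤ (1 + c) * (p^2 + q^2) := by nlinarith [h2, h3]
  -- s ≤ (1+c) N²
  have h5 : p^2 + q^2 ≤ (1 + c) * N^2 := by
    rcases eq_or_lt_of_le (show (0:ℝ) ≤ p^2 + q^2 by positivity) with h | h
    · rw [← h]; positivity
    · have hsq : (p^2 + q^2)^2 ≤ ((1 + c) * (p^2 + q^2)) * N^2 := by
        have h1' : (p^2 + q^2)^2 ≤ (‖E f + F f‖ * N)^2 :=
          pow_le_pow_left₀ (by positivity) h1 2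
        have : (‖E f + F f‖ * N)^2 = ‖E f + F f‖^2 * N^2 := by ring
        rw [this] at h1'
        calc (p^2+q^2)^2 ≤ ‖E f + F f‖^2 * N^2 := h1'
          _ ≤ ((1 + c) * (p^2 + q^2)) * N^2 := by
              apply mul_le_mul_of_nonneg_right hRsq (sq_nonneg _)
      nlinarith [hsq, h]
  -- finish
  rw [hPE, hPF, inv_pow, inv_mul_eq_div, le_div_iff₀ (pow_pos (by linarith : (0:ℝ) < 1 - c) 2)]
  nlinarith [h5, hc0, hnorm, sq_nonneg N, mul_nonneg (mul_nonneg hc0 (sub_nonneg.mpr hnorm.le)) (sq_nonneg N)]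
end

section
/- Let α ≥ 0. There exists a constant c = c(α) > 0 such that for every ε ∈ (0,1) and every (ε,α)-thin set S ⊆ ℝ⁺, one has μ_α(S ∩ [x−1/2, x+1/2]) ≤ c ε μ_α([x−1/2, x+1/2]) for all x ≥ 1/2; consequently, if cε < 1, then the complement Ω = ℝ⁺∖S is (1−cε, 1/2)-relatively dense. -/
open MeasureTheory Real Set

/-- The measure `dμ_α(x) = (2π^{α+1}/Γ(α+1)) x^{2α+1} dx` on `ℝ⁺ = [0,∞)`. -/
noncomputable def muB (α : ℝ) : Measure ℝ :=
  (volume.restrict (Set.Ici (0:ℝ))).withDensity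
    (fun x => ENNReal.ofReal (2 * π ^ (α+1) / Gamma (α+1) * x ^ (2*α+1)))

/-- `S` is `(ε,α)`-thin. -/
def Thin (α ε : ℝ) (S : Set ℝ) : Prop :=
  (∀ x : ℝ, 0 ≤ x → x ≤ 1 →
    muB α (S ∩ Set.Icc x (x+1)) ≤ ENNReal.ofReal ε * muB α (Set.Icc x (x+1))) ∧
  (∀ x : ℝ, 1 ≤ x →
    muB α (S ∩ Set.Icc x (x+1/x)) ≤ ENNReal.ofReal ε * muB α (Set.Icc x (x+1/x)))

/-- `Ω` is `(γ,a)`-relatively dense for `μ_α`. -/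
def RelDense (α γ a : ℝ) (Ω : Set ℝ) : Prop :=
  ∀ x, a ≤ x →
    ENNReal.ofReal γ * muB α (Set.Icc (x-a) (x+a)) ≤ muB α (Ω ∩ Set.Icc (x-a) (x+a))

/-!
On `[a, a + 1]` with `a ≥ 1` the density `x ^ (2α+1)` varies only by the factor `3 ^ (2α+1)`,
while thinness controls `S` on the much shorter windows `[x, x + 1/x]`. About `a + 2 ≤ 3a` such
windows cover `[a, a + 1]`, each of relative weight at most `3 ^ (2α+1) / a`, so `S` occupies at
most a fraction `3 ^ (2α+2) ε` of `[a, a + 1]`. For `a ≤ 1` thinness applies to `[a, a + 1]`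
directly.
-/

noncomputable def muBConst (α : ℝ) : ℝ := 2 * π ^ (α+1) / Gamma (α+1)

lemma muBConst_pos {α : ℝ} (hα : -1 < α) : 0 < muBConst α := by
  have := Gamma_pos_of_pos (show 0 < α + 1 by linarith)
  unfold muBConst
  positivity

lemma muB_apply {α : ℝ} {A : Set ℝ} (hA : MeasurableSet A) (hA0 : A ⊆ Ici 0) :
    muB α A = ∫⁻ x in A, ENNReal.ofReal (muBConst α * x ^ (2*α+1)) := by
  rw [muB, withDensity_apply _ hA, Measure.restrict_restrict hA, inter_eq_left.mpr hA0]
  rfl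

lemma muB_Icc_le {α : ℝ} (hα : -1/2 ≤ α) {a b : ℝ} (ha : 0 ≤ a) (hab : a ≤ b) :
    muB α (Icc a b) ≤ ENNReal.ofReal (muBConst α * b ^ (2*α+1) * (b - a)) := by
  have hC := (muBConst_pos (by linarith : -1 < α)).le
  rw [muB_apply measurableSet_Icc fun x hx => ha.trans hx.1]
  calc ∫⁻ x in Icc a b, ENNReal.ofReal (muBConst α * x ^ (2*α+1))
      ≤ ∫⁻ _ in Icc a b, ENNReal.ofReal (muBConst α * b ^ (2*α+1)) := by
        refine setLIntegral_mono measurable_const fun x hx => ?_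
        gcongr
        · exact ha.trans hx.1
        · linarith
        · exact hx.2
    _ = ENNReal.ofReal (muBConst α * b ^ (2*α+1) * (b - a)) := by
        rw [setLIntegral_const, Real.volume_Icc,
          ← ENNReal.ofReal_mul (mul_nonneg hC (rpow_nonneg (ha.trans hab) _))]

lemma ofReal_le_muB_Icc {α : ℝ} (hα : -1/2 ≤ α) {a : ℝ} (ha : 0 ≤ a) (b : ℝ) :
    ENNReal.ofReal (muBConst α * a ^ (2*α+1) * (b - a)) ≤ muB α (Icc a b) := by
  have hC := (muBConst_pos (by linarith : -1 < α)).le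
  rw [muB_apply measurableSet_Icc fun x hx => ha.trans hx.1]
  calc ENNReal.ofReal (muBConst α * a ^ (2*α+1) * (b - a))
      = ∫⁻ _ in Icc a b, ENNReal.ofReal (muBConst α * a ^ (2*α+1)) := by
        rw [setLIntegral_const, Real.volume_Icc, ← ENNReal.ofReal_mul (by positivity)]
    _ ≤ ∫⁻ x in Icc a b, ENNReal.ofReal (muBConst α * x ^ (2*α+1)) := by
        refine setLIntegral_mono (by fun_prop) fun x hx => ?_
        gcongr
        · linarith
        · exact hx.1

lemma muB_Icc_lt_top {α : ℝ} (hα : -1/2 ≤ α) {a b : ℝ} (ha : 0 ≤ a) (hab : a ≤ b) :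
    muB α (Icc a b) < ⊤ :=
  (muB_Icc_le hα ha hab).trans_lt ENNReal.ofReal_lt_top

lemma muB_Icc_add_inv_le {α : ℝ} (hα : -1/2 ≤ α) {a x : ℝ} (ha : 1 ≤ a) (hax : a ≤ x)
    (hxa : x ≤ a + 1) :
    muB α (Icc x (x + 1/x)) ≤ ENNReal.ofReal (3 ^ (2*α+1) / a) * muB α (Icc a (a+1)) := by
  have hC := (muBConst_pos (by linarith : -1 < α)).le
  have hx0 : 0 < x := by linarith
  have hinv : 1/x ≤ 1/a := one_div_le_one_div_of_le (by linarith) hax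
  have hinv1 : 1/x ≤ 1 := (div_le_one hx0).mpr (by linarith)
  calc muB α (Icc x (x + 1/x))
      ≤ ENNReal.ofReal (muBConst α * (x + 1/x) ^ (2*α+1) * (x + 1/x - x)) :=
        muB_Icc_le hα hx0.le (by simp [hx0.le])
    _ ≤ ENNReal.ofReal (muBConst α * (3 * a) ^ (2*α+1) * (1/a)) := by
        rw [add_sub_cancel_left]
        gcongr
        · linarith
        · linarith
    _ = ENNReal.ofReal (3 ^ (2*α+1) / a) *
          ENNReal.ofReal (muBConst α * a ^ (2*α+1) * (a + 1 - a)) := by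
        rw [← ENNReal.ofReal_mul (by positivity), mul_rpow (by norm_num) (by linarith)]
        ring_nf
    _ ≤ ENNReal.ofReal (3 ^ (2*α+1) / a) * muB α (Icc a (a+1)) := by
        gcongr
        exact ofReal_le_muB_Icc hα (by linarith) _

lemma Set.Icc_subset_biUnion_Icc_succ {β : Type*} [LinearOrder β] (t : ℕ → β) {n : ℕ}
    (hn : 0 < n) : Icc (t 0) (t n) ⊆ ⋃ k ∈ Finset.range n, Icc (t k) (t (k+1)) := by
  induction n, hn using Nat.le_induction with
  | base => simp
  | succ n _ ih =>
    rintro y ⟨hy0, hy⟩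
    rw [Finset.range_add_one, Finset.set_biUnion_insert]
    rcases le_or_gt y (t n) with hyn | hyn
    · exact Or.inr (ih ⟨hy0, hyn⟩)
    · exact Or.inl ⟨hyn.le, hy⟩

lemma Thin.muB_inter_Icc_add_one_le_of_one_le {α ε : ℝ} (hα : -1/2 ≤ α) {S : Set ℝ}
    (hS : Thin α ε S) {a : ℝ} (ha : 1 ≤ a) :
    muB α (S ∩ Icc a (a+1)) ≤
      ENNReal.ofReal (3 ^ (2*α+2)) * ENNReal.ofReal ε * muB α (Icc a (a+1)) := by
  set N := ⌈a + 1⌉₊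
  have hN : a + 1 ≤ N := Nat.le_ceil _
  have hN' : (N : ℝ) ≤ a + 2 := by linarith [Nat.ceil_lt_add_one (by linarith : 0 ≤ a + 1)]
  have hN0 : (0 : ℝ) < N := by linarith
  set t : ℕ → ℝ := fun k => a + k / N
  have ht : ∀ k ∈ Finset.range N, a ≤ t k ∧ t k ≤ a + 1 := fun k hk => by
    have : (k : ℝ) ≤ N := by exact_mod_cast (Finset.mem_range.mp hk).le
    exact ⟨le_add_of_nonneg_right (by positivity),
      by simpa [t] using div_le_one_of_le₀ this hN0.le⟩
  have hcover : Icc a (a+1) ⊆ ⋃ k ∈ Finset.range N, Icc (t k) (t k + 1 / t k) := by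
    have h := Set.Icc_subset_biUnion_Icc_succ t (Nat.cast_pos.mp hN0)
    rw [show t 0 = a by simp [t], show t N = a + 1 by simp [t, hN0.ne']] at h
    refine h.trans (iUnion₂_mono fun k hk => Icc_subset_Icc_right ?_)
    have hstep : t (k+1) = t k + 1 / N := by simp only [t]; push_cast; ring
    have hN_inv : 1 / (N : ℝ) ≤ 1 / t k :=
      one_div_le_one_div_of_le (by linarith [(ht k hk).1]) (by linarith [(ht k hk).2])
    linarith
  have hterm : ∀ k ∈ Finset.range N, muB α (S ∩ Icc (t k) (t k + 1 / t k)) ≤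
      ENNReal.ofReal ε * (ENNReal.ofReal (3 ^ (2*α+1) / a) * muB α (Icc a (a+1))) := by
    intro k hk
    refine (hS.2 (t k) (by linarith [(ht k hk).1])).trans ?_
    gcongr
    exact muB_Icc_add_inv_le hα ha (ht k hk).1 (ht k hk).2
  have hcount : (N : ℝ) * (3 ^ (2*α+1) / a) ≤ 3 ^ (2*α+2) := by
    have h3 : (3:ℝ) ^ (2*α+2) = 3 * a * (3 ^ (2*α+1) / a) := by
      rw [show 2*α+2 = (2*α+1)+1 by ring, rpow_add_one (by norm_num)]
      field_simp
    rw [h3]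
    gcongr
    linarith
  calc muB α (S ∩ Icc a (a+1))
      ≤ muB α (⋃ k ∈ Finset.range N, S ∩ Icc (t k) (t k + 1 / t k)) := by
        rw [← inter_iUnion₂]
        exact measure_mono (inter_subset_inter_right S hcover)
    _ ≤ ∑ k ∈ Finset.range N, muB α (S ∩ Icc (t k) (t k + 1 / t k)) :=
        measure_biUnion_finset_le _ _
    _ ≤ ∑ k ∈ Finset.range N,
          ENNReal.ofReal ε * (ENNReal.ofReal (3 ^ (2*α+1) / a) * muB α (Icc a (a+1))) :=
        Finset.sum_le_sum hterm
    _ = ENNReal.ofReal (N * (3 ^ (2*α+1) / a)) * ENNReal.ofReal ε * muB α (Icc a (a+1)) := by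
        rw [Finset.sum_const, Finset.card_range, nsmul_eq_mul,
          ENNReal.ofReal_mul (Nat.cast_nonneg N), ENNReal.ofReal_natCast]
        ring
    _ ≤ ENNReal.ofReal (3 ^ (2*α+2)) * ENNReal.ofReal ε * muB α (Icc a (a+1)) := by
        gcongr

lemma Thin.muB_inter_Icc_add_one_le {α ε : ℝ} (hα : -1/2 ≤ α) {S : Set ℝ}
    (hS : Thin α ε S) {a : ℝ} (ha : 0 ≤ a) :
    muB α (S ∩ Icc a (a+1)) ≤
      ENNReal.ofReal (3 ^ (2*α+2)) * ENNReal.ofReal ε * muB α (Icc a (a+1)) := by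
  rcases le_total a 1 with ha1 | ha1
  · refine (hS.1 a ha ha1).trans ?_
    gcongr
    exact le_mul_of_one_le_left'
      (ENNReal.one_le_ofReal.mpr (one_le_rpow (by norm_num) (by linarith)))
  · exact hS.muB_inter_Icc_add_one_le_of_one_le hα ha1

lemma MeasureTheory.Measure.one_sub_mul_le_measure_diff {X : Type*} [MeasurableSpace X]
    {μ : Measure X} {S W : Set X} {d : ENNReal} (hW : μ W ≠ ⊤)
    (hSW : μ (S ∩ W) ≤ d * μ W) :
    (1 - d) * μ W ≤ μ (W \ S) := by
  rw [ENNReal.sub_mul fun _ _ => hW, one_mul, tsub_le_iff_left]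
  calc μ W ≤ μ (W ∩ S) + μ (W \ S) := measure_le_inter_add_sdiff μ W S
    _ ≤ d * μ W + μ (W \ S) := by rw [inter_comm]; gcongr

/-- The complement of an `(ε,α)`-thin set is `(1 − cε, 1/2)`-relatively dense. -/
theorem complement_of_thin_relDense {α : ℝ} (hα : 0 ≤ α) :
    ∃ c > (0:ℝ), ∀ ε : ℝ, 0 < ε → ε < 1 →
      ∀ S : Set ℝ, MeasurableSet S → S ⊆ Set.Ici 0 → Thin α ε S →
        (∀ x : ℝ, 1/2 ≤ x →
          muB α (S ∩ Set.Icc (x - 1/2) (x + 1/2)) ≤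
            ENNReal.ofReal (c * ε) * muB α (Set.Icc (x - 1/2) (x + 1/2))) ∧
        (c * ε < 1 → RelDense α (1 - c * ε) (1/2) (Set.Ici 0 \ S)) := by
  refine ⟨3 ^ (2*α+2), by positivity, fun ε hε _ S _ _ hS => ?_⟩
  have hbound : ∀ x : ℝ, 1/2 ≤ x →
      muB α (S ∩ Icc (x - 1/2) (x + 1/2)) ≤
        ENNReal.ofReal (3 ^ (2*α+2) * ε) * muB α (Icc (x - 1/2) (x + 1/2)) := by
    intro x hx
    rw [ENNReal.ofReal_mul (by positivity), show x + 1/2 = x - 1/2 + 1 by ring]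
    exact hS.muB_inter_Icc_add_one_le (by linarith) (by linarith)
  refine ⟨hbound, fun _ x hx => ?_⟩
  have hW : Icc (x - 1/2) (x + 1/2) ⊆ Ici 0 := fun y hy => by simp only [mem_Ici]; linarith [hy.1]
  rw [← inter_sdiff_right_comm, inter_eq_right.mpr hW, ENNReal.ofReal_sub 1 (by positivity),
    ENNReal.ofReal_one]
  exact Measure.one_sub_mul_le_measure_diff
    (muB_Icc_lt_top (by linarith) (by linarith) (by linarith)).ne (hbound x hx)
end

section
/- Let α ≥ 0, a, b > 0, let f ∈ PW_α(ab), and let g be the entire function with f(x) = g(x²) for x ≥ 0. Suppose x ≥ 1 is good, i.e. for every integer k ≥ 1 one has ∫_{I_x} |g^{(k)}(s)|² s^{α+k} ds < (2πab)^{2k} ∫_{I_x} |g(s)|² s^α ds, where I_x = [(x−1)², (x+1)²]. Then there exists t_x ∈ I_x such that for every integer k ≥ 0: t_x^{α+k} |g^{(k)}(t_x)|² ≤ (12 π² a² b²)^k ∫_{I_x} |g(s)|² s^α ds. -/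
open MeasureTheory Real Set

/-- The normalized Bessel function `j_α`. -/
noncomputable def besselJ (α : ℝ) (x : ℝ) : ℝ :=
  Gamma (α+1) * ∑' n : ℕ,
    ((-1:ℝ)^n / ((n.factorial : ℝ) * Gamma ((n:ℝ) + α + 1))) * (x/2)^(2*n)

/-- The Paley-Wiener space `PW_α(b)`. -/
def PW (α b : ℝ) (f : ℝ → ℂ) : Prop :=
  MemLp f 2 (muB α) ∧ ∃ g : ℝ → ℂ, MemLp g 2 (muB α) ∧
    (∀ y, y ∉ Set.Icc 0 b → g y = 0) ∧
    ∀ x ≥ (0:ℝ), f x = ∫ y in Set.Icc 0 b, g y * (besselJ α (2*π*x*y) : ℂ) ∂(muB α)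

/-!
Chebyshev's inequality on `I_x`: the set where `t^{α+k} |g^{(k)}(t)|²` exceeds
`3^k (2πab)^{2k} ∫_{I_x} |g|² s^α` has measure at most `3^{-k}` by goodness, so all these
exceptional sets together have measure at most `∑ 3^{-k} = 3/2 < 4x = |I_x|`, and a point of
`I_x` outside all of them exists.
-/

section Chebyshev

variable {X : Type*} [MeasurableSpace X] {μ : Measure X}

theorem meas_ge_le_ofReal_integral_div {f : X → ℝ} (hf : 0 ≤ᵐ[μ] f) (hfi : Integrable f μ)
    {c : ℝ} (hc : 0 < c) :
    μ {x | c ≤ f x} ≤ ENNReal.ofReal ((∫ x, f x ∂μ) / c) := by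
  have hset : {x | c ≤ f x} = {x | ENNReal.ofReal c ≤ ENNReal.ofReal (f x)} := by
    ext x
    simp only [mem_ofPred_eq, ENNReal.ofReal_le_ofReal_iff', not_le.mpr hc, or_false]
  rw [hset, ENNReal.ofReal_div_of_pos hc, ofReal_integral_eq_lintegral_ofReal hfi hf]
  exact meas_ge_le_lintegral_div hfi.aemeasurable.ennreal_ofReal
    (ENNReal.ofReal_pos.mpr hc).ne' ENNReal.ofReal_ne_top

theorem exists_mem_forall_le_of_tsum_lt {s : Set X} {w : ℕ → X → ℝ} {C : ℕ → ℝ}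
    (hw : ∀ k, 0 ≤ᵐ[μ.restrict s] w k) (hint : ∀ k, IntegrableOn (w k) s μ)
    (hC : ∀ k, 0 < C k)
    (hlt : ∑' k, ENNReal.ofReal ((∫ x in s, w k x ∂μ) / C k) < μ s) :
    ∃ t ∈ s, ∀ k, w k t ≤ C k := by
  by_contra! hbad
  have hcover : s ⊆ ⋃ k, {x | C k ≤ w k x} := fun t ht ↦ by
    obtain ⟨k, hk⟩ := hbad t ht
    exact mem_iUnion.mpr ⟨k, hk.le⟩
  refine hlt.not_ge ?_
  calc μ s = μ ((⋃ k, {x | C k ≤ w k x}) ∩ s) := by rw [inter_eq_right.mpr hcover]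
    _ ≤ μ.restrict s (⋃ k, {x | C k ≤ w k x}) := Measure.le_restrict_apply _ _
    _ ≤ ∑' k, μ.restrict s {x | C k ≤ w k x} := measure_iUnion_le _
    _ ≤ _ := ENNReal.tsum_le_tsum fun k ↦
      meas_ge_le_ofReal_integral_div (hw k) (hint k) (hC k)

theorem exists_mem_forall_le_geometric {s : Set X} {w : ℕ → X → ℝ}
    (hw : ∀ k, 0 ≤ᵐ[μ.restrict s] w k) (hint : ∀ k, IntegrableOn (w k) s μ)
    {q M r : ℝ} (hq : 0 < q) (hM : 0 < M) (hr : 1 < r)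
    (hbound : ∀ k, ∫ x in s, w k x ∂μ ≤ q ^ k * M)
    (hs : ENNReal.ofReal (1 - r⁻¹)⁻¹ < μ s) :
    ∃ t ∈ s, ∀ k, w k t ≤ (r * q) ^ k * M := by
  have hr₀ : 0 < r := zero_lt_one.trans hr
  have hratio : ∀ k, (∫ x in s, w k x ∂μ) / ((r * q) ^ k * M) ≤ r⁻¹ ^ k := fun k ↦ by
    rw [div_le_iff₀ (by positivity), mul_pow, inv_pow, ← mul_assoc, ← mul_assoc,
      inv_mul_cancel₀ (by positivity), one_mul]
    exact hbound k
  have hgeom : ∑' k : ℕ, ENNReal.ofReal (r⁻¹ ^ k) = ENNReal.ofReal (1 - r⁻¹)⁻¹ := by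
    have hr' : r⁻¹ < 1 := inv_lt_one_of_one_lt₀ hr
    rw [← ENNReal.ofReal_tsum_of_nonneg (fun k ↦ by positivity)
      (summable_geometric_of_lt_one (by positivity) hr'), tsum_geometric_of_lt_one (by positivity) hr']
  refine exists_mem_forall_le_of_tsum_lt hw hint (fun k ↦ by positivity) ?_
  calc _ ≤ ∑' k : ℕ, ENNReal.ofReal (r⁻¹ ^ k) :=
        ENNReal.tsum_le_tsum fun k ↦ ENNReal.ofReal_le_ofReal (hratio k)
    _ < μ s := hgeom ▸ hs

end Chebyshev

theorem continuous_norm_iteratedDeriv_ofReal_sq_mul_rpow {g : ℂ → ℂ} (hg : Differentiable ℂ g)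
    (k : ℕ) {p : ℝ} (hp : 0 ≤ p) :
    Continuous fun s : ℝ ↦ ‖iteratedDeriv k g s‖ ^ 2 * s ^ p :=
  ((((hg.contDiff (n := ⊤)).continuous_iteratedDeriv k le_top).comp
    Complex.continuous_ofReal).norm.pow 2).mul (Real.continuous_rpow_const hp)

theorem good_interval_point_estimate_general
    {α a b : ℝ} (hα : 0 ≤ α) {g : ℂ → ℂ} (hg : Differentiable ℂ g)
    (x : ℝ) (hx : 1 ≤ x)
    (hgood : ∀ k : ℕ, 1 ≤ k →
      (∫ s in Set.Icc ((x-1)^2) ((x+1)^2),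
          ‖iteratedDeriv k g ((s:ℝ):ℂ)‖^2 * s ^ (α + (k:ℝ))) <
        (2*π*a*b)^(2*k) *
          ∫ s in Set.Icc ((x-1)^2) ((x+1)^2), ‖g ((s:ℝ):ℂ)‖^2 * s ^ α) :
    ∃ t ∈ Set.Icc ((x-1)^2) ((x+1)^2), ∀ k : ℕ,
      t ^ (α + (k:ℝ)) * ‖iteratedDeriv k g ((t:ℝ):ℂ)‖^2 ≤
        (12*π^2*a^2*b^2)^k *
          ∫ s in Set.Icc ((x-1)^2) ((x+1)^2), ‖g ((s:ℝ):ℂ)‖^2 * s ^ α := by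
  set I := Icc ((x-1)^2) ((x+1)^2)
  set M := ∫ s in I, ‖g ((s:ℝ):ℂ)‖^2 * s ^ α
  set w : ℕ → ℝ → ℝ := fun k s ↦ ‖iteratedDeriv k g ((s:ℝ):ℂ)‖^2 * s ^ (α + (k:ℝ))
  have hw : ∀ k, 0 ≤ᵐ[volume.restrict I] w k := fun k ↦
    ae_restrict_of_forall_mem measurableSet_Icc fun s hs ↦
      mul_nonneg (by positivity) (rpow_nonneg ((sq_nonneg _).trans hs.1) _)
  have hint : ∀ k, IntegrableOn (w k) I :=
    fun k ↦ (continuous_norm_iteratedDeriv_ofReal_sq_mul_rpow hg k (by positivity)).integrableOn_Icc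
  have hgood' : ∀ k, ∫ s in I, w (k + 1) s < ((2*π*a*b)^2) ^ (k + 1) * M := fun k ↦ by
    rw [← pow_mul]; exact hgood (k + 1) le_add_self
  have hqM : 0 < (2*π*a*b)^2 * M := by
    simpa using (integral_nonneg_of_ae (hw 1)).trans_lt (hgood' 0)
  obtain ⟨hq, hM⟩ : 0 < (2*π*a*b)^2 ∧ 0 < M :=
    (pos_and_pos_or_neg_and_neg_of_mul_pos hqM).resolve_right fun h ↦ (sq_nonneg _).not_gt h.1
  have hbound : ∀ k, ∫ s in I, w k s ≤ ((2*π*a*b)^2) ^ k * M := by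
    rintro (_ | k)
    · simp [w, M]
    · exact (hgood' k).le
  have hvol : ENNReal.ofReal (1 - 3⁻¹)⁻¹ < volume I := by
    rw [Real.volume_Icc, ENNReal.ofReal_lt_ofReal_iff (by nlinarith)]
    nlinarith
  obtain ⟨t, ht, hle⟩ := exists_mem_forall_le_geometric hw hint hq hM (by norm_num) hbound hvol
  refine ⟨t, ht, fun k ↦ ?_⟩
  rw [mul_comm]
  convert hle k using 3
  ring

/-- On a good interval `I_x` there is a point `t_x` at which all derivatives of
`g` are controlled by the weighted `L²`-norm of `g` on `I_x`. -/
theorem good_interval_point_estimate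
    {α a b : ℝ} (hα : 0 ≤ α) (ha : 0 < a) (hb : 0 < b)
    {f : ℝ → ℂ} (hf : PW α (a*b) f) {g : ℂ → ℂ} (hg : Differentiable ℂ g)
    (hfg : ∀ x : ℝ, 0 ≤ x → f x = g (((x:ℝ):ℂ)^2))
    (x : ℝ) (hx : 1 ≤ x)
    (hgood : ∀ k : ℕ, 1 ≤ k →
      (∫ s in Set.Icc ((x-1)^2) ((x+1)^2),
          ‖iteratedDeriv k g ((s:ℝ):ℂ)‖^2 * s ^ (α + (k:ℝ))) <
        (2*π*a*b)^(2*k) *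
          ∫ s in Set.Icc ((x-1)^2) ((x+1)^2), ‖g ((s:ℝ):ℂ)‖^2 * s ^ α) :
    ∃ t ∈ Set.Icc ((x-1)^2) ((x+1)^2), ∀ k : ℕ,
      t ^ (α + (k:ℝ)) * ‖iteratedDeriv k g ((t:ℝ):ℂ)‖^2 ≤
        (12*π^2*a^2*b^2)^k *
          ∫ s in Set.Icc ((x-1)^2) ((x+1)^2), ‖g ((s:ℝ):ℂ)‖^2 * s ^ α :=
  good_interval_point_estimate_general hα hg x hx hgood
end

section
/- Let α ≥ 0, a, b > 0, let f ∈ PW_α(ab), and let g be the entire function with f(x) = g(x²) for x ≥ 0. Let x ≥ 2 and suppose t_x ∈ I_x = [(x−1)², (x+1)²] satisfies t_x^{α+k} |g^{(k)}(t_x)|² ≤ (12 π² a² b²)^k ∫_{I_x} |g(s)|² s^α ds for every integer k ≥ 0. Then for every z ∈ ℂ with |z − t_x| ≤ 20x: |g(z)| ≤ e^{80√3·π a b} · t_x^{−α/2} · (∫_{I_x} |g(s)|² s^α ds)^{1/2}. -/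
open MeasureTheory Real Set

/-!
Expand `g` in its Taylor series at `t`. The hypothesis on the derivatives bounds the `k`-th
Taylor coefficient by `t^(-α/2) √J (√C/√t)^k / k!` with `C = 12π²a²b²`, so on the disc
`|z - t| ≤ 20x` the series is dominated by `t^(-α/2) √J exp(20x √C/√t)`. Since
`√t ≥ x - 1 ≥ x/2`, the exponent is at most `40 √C = 80√3 π a b`.
-/

open Nat

theorem norm_le_mul_exp_of_norm_iteratedDeriv_le {g : ℂ → ℂ} (hg : Differentiable ℂ g)
    {c : ℂ} {M q : ℝ} (hM : ∀ k, ‖iteratedDeriv k g c‖ ≤ M * q ^ k) (z : ℂ) :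
    ‖g z‖ ≤ M * exp (q * ‖z - c‖) := by
  have hexp : HasSum (fun k : ℕ ↦ M * ((q * ‖z - c‖) ^ k / k !)) (M * exp (q * ‖z - c‖)) := by
    rw [exp_eq_exp_ℝ]
    exact (NormedSpace.expSeries_div_hasSum_exp _).mul_left M
  refine (Complex.hasSum_taylorSeries_of_entire hg c z).norm_le_of_bounded hexp fun k ↦ ?_
  rw [norm_smul, norm_smul, norm_inv, norm_pow, Complex.norm_natCast]
  calc (k ! : ℝ)⁻¹ * (‖z - c‖ ^ k * ‖iteratedDeriv k g c‖)
      ≤ (k ! : ℝ)⁻¹ * (‖z - c‖ ^ k * (M * q ^ k)) := by gcongr; exact hM k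
    _ = M * ((q * ‖z - c‖) ^ k / k !) := by ring

theorem le_rpow_neg_half_mul_sqrt_mul_pow_of_rpow_mul_sq_le {α C J t d : ℝ} {k : ℕ}
    (ht : 0 < t) (hd : 0 ≤ d) (hC : 0 ≤ C) (hJ : 0 ≤ J)
    (h : t ^ (α + k) * d ^ 2 ≤ C ^ k * J) :
    d ≤ t ^ (-α / 2) * √J * (√C / √t) ^ k := by
  have hsq : (t ^ (-α / 2) * √J * (√C / √t) ^ k) ^ 2 = C ^ k * J / t ^ (α + k) := by
    rw [mul_pow, mul_pow, ← pow_mul, mul_comm k, pow_mul, div_pow, sq_sqrt hJ, sq_sqrt hC,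
      sq_sqrt ht.le, ← rpow_natCast (t ^ _), ← rpow_mul ht.le, rpow_add ht, rpow_natCast,
      show -α / 2 * ((2 : ℕ) : ℝ) = -α by push_cast; ring, rpow_neg ht.le, div_pow]
    field_simp
  rw [← pow_le_pow_iff_left₀ hd (by positivity) two_ne_zero, hsq, le_div_iff₀ (by positivity)]
  linarith

theorem div_sqrt_le_two {x t : ℝ} (hx : 2 ≤ x) (ht : (x - 1) ^ 2 ≤ t) : x / √t ≤ 2 := by
  have hxt : x - 1 ≤ √t := (le_sqrt (by linarith) ((sq_nonneg _).trans ht)).2 ht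
  rw [div_le_iff₀ (by linarith)]
  linarith

theorem good_interval_sup_estimate_general
    {α a b : ℝ} (ha : 0 < a) (hb : 0 < b)
    {g : ℂ → ℂ} (hg : Differentiable ℂ g)
    (x : ℝ) (hx : 2 ≤ x) {t : ℝ} (ht : t ∈ Set.Icc ((x-1)^2) ((x+1)^2))
    (hder : ∀ k : ℕ,
      t ^ (α + (k:ℝ)) * ‖iteratedDeriv k g ((t:ℝ):ℂ)‖^2 ≤
        (12*π^2*a^2*b^2)^k *
          ∫ s in Set.Icc ((x-1)^2) ((x+1)^2), ‖g ((s:ℝ):ℂ)‖^2 * s ^ α) :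
    ∀ z : ℂ, ‖z - ((t:ℝ):ℂ)‖ ≤ 20*x →
      ‖g z‖ ≤ Real.exp (80 * Real.sqrt 3 * π * a * b) * t ^ (-α/2) *
        Real.sqrt (∫ s in Set.Icc ((x-1)^2) ((x+1)^2), ‖g ((s:ℝ):ℂ)‖^2 * s ^ α) := by
  intro z hz
  set J := ∫ s in Set.Icc ((x-1)^2) ((x+1)^2), ‖g ((s:ℝ):ℂ)‖^2 * s ^ α
  have hJ : 0 ≤ J := setIntegral_nonneg measurableSet_Icc fun s hs ↦ by
    have : 0 ≤ s := (sq_nonneg _).trans hs.1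
    positivity
  have ht0 : 0 < t := lt_of_lt_of_le (by nlinarith) ht.1
  have hsqrtC : √(12 * π ^ 2 * a ^ 2 * b ^ 2) = 2 * √3 * π * a * b := by
    rw [sqrt_eq_iff_mul_self_eq (by positivity) (by positivity)]
    linear_combination (-4 * π ^ 2 * a ^ 2 * b ^ 2) * (mul_self_sqrt (zero_le_three (α := ℝ)))
  have hexponent : √(12 * π ^ 2 * a ^ 2 * b ^ 2) / √t * ‖z - t‖ ≤ 80 * √3 * π * a * b :=
    calc √(12 * π ^ 2 * a ^ 2 * b ^ 2) / √t * ‖z - t‖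
        ≤ √(12 * π ^ 2 * a ^ 2 * b ^ 2) / √t * (20 * x) := by gcongr
      _ = 2 * √3 * π * a * b * 20 * (x / √t) := by rw [hsqrtC]; ring
      _ ≤ 2 * √3 * π * a * b * 20 * 2 := by gcongr; exact div_sqrt_le_two hx ht.1
      _ = 80 * √3 * π * a * b := by ring
  calc ‖g z‖ ≤ t ^ (-α / 2) * √J * exp (√(12 * π ^ 2 * a ^ 2 * b ^ 2) / √t * ‖z - t‖) :=
        norm_le_mul_exp_of_norm_iteratedDeriv_le hg (fun k ↦
          le_rpow_neg_half_mul_sqrt_mul_pow_of_rpow_mul_sq_le ht0 (norm_nonneg _) (by positivity)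
            hJ (hder k)) z
    _ ≤ t ^ (-α / 2) * √J * exp (80 * √3 * π * a * b) := by gcongr
    _ = exp (80 * √3 * π * a * b) * t ^ (-α / 2) * √J := by ring

/-- The power-series bound for `g` on a complex disc around the point `t_x` of
a good interval. -/
theorem good_interval_sup_estimate
    {α a b : ℝ} (hα : 0 ≤ α) (ha : 0 < a) (hb : 0 < b)
    {f : ℝ → ℂ} (hf : PW α (a*b) f) {g : ℂ → ℂ} (hg : Differentiable ℂ g)
    (hfg : ∀ x : ℝ, 0 ≤ x → f x = g (((x:ℝ):ℂ)^2))
    (x : ℝ) (hx : 2 ≤ x) {t : ℝ} (ht : t ∈ Set.Icc ((x-1)^2) ((x+1)^2))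
    (hder : ∀ k : ℕ,
      t ^ (α + (k:ℝ)) * ‖iteratedDeriv k g ((t:ℝ):ℂ)‖^2 ≤
        (12*π^2*a^2*b^2)^k *
          ∫ s in Set.Icc ((x-1)^2) ((x+1)^2), ‖g ((s:ℝ):ℂ)‖^2 * s ^ α) :
    ∀ z : ℂ, ‖z - ((t:ℝ):ℂ)‖ ≤ 20*x →
      ‖g z‖ ≤ Real.exp (80 * Real.sqrt 3 * π * a * b) * t ^ (-α/2) *
        Real.sqrt (∫ s in Set.Icc ((x-1)^2) ((x+1)^2), ‖g ((s:ℝ):ℂ)‖^2 * s ^ α) :=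
  good_interval_sup_estimate_general ha hb hg x hx ht hder
end

section
/- Let α > −1/2, set ϑ_α = (4π)^{α+1} Γ(α+2), and let s > 0 be a zero of j_{α+1}. Then for every x ≥ 0 with x ≠ s: ϑ_α ∫_0^{1/(2π)} j_α(2πsy) j_α(2πxy) dμ_α(y) = j_α(s) · x² j_{α+1}(x) / (x² − s²). In other words, the Fourier–Bessel transform of ϑ_α j_α(2πs·)χ_{[0,1/(2π)]} is the function x ↦ j_α(s) x² j_{α+1}(x)/(x² − s²). -/
/-!
Write `u_c(t) = j_α(ct)`. From `j_α'(z) = -z j_{α+1}(z) / (2(α+1))` and the recursion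
`j_α = j_{α+1} - z² j_{α+2} / (4(α+1)(α+2))` one gets
`(t^{2α+2} j_{α+1}(ct))' = 2(α+1) t^{2α+1} u_c(t)` and
`t^{2α+1} u_c'(t) = -c² t^{2α+2} j_{α+1}(ct) / (2(α+1))`. Hence
`W = x² u_s · t^{2α+2} j_{α+1}(x·) - s² t^{2α+2} j_{α+1}(s·) · u_x` is an antiderivative of
`2(α+1)(x² - s²) t^{2α+1} u_s u_x` that vanishes at `0` (Lommel's integral). The substitution
`t = 2πy` turns the integral against `μ_α` into this one, the constants combine to `2(α+1)`, and
`j_{α+1}(s) = 0` removes one of the two boundary terms at `t = 1`.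
-/

open MeasureTheory Real Set

open Filter
open scoped Nat

noncomputable def besselCoeff (α : ℝ) (n : ℕ) : ℝ :=
  (-1) ^ n / (n ! * Gamma (n + α + 1))

noncomputable def besselSeries (α w : ℝ) : ℝ :=
  ∑' n, besselCoeff α n * w ^ n

theorem besselCoeff_succ_mul (α : ℝ) (n : ℕ) :
    besselCoeff α (n + 1) * (n + 1) = -besselCoeff (α + 1) n := by
  rw [besselCoeff, besselCoeff, Nat.factorial_succ,
    show ((n + 1 : ℕ) : ℝ) + α + 1 = n + (α + 1) + 1 by push_cast; ring]
  push_cast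
  field_simp
  ring

section BesselSeries

variable {α : ℝ}

theorem besselCoeff_eq_mul_besselCoeff_add_one (hα : -1 < α) (n : ℕ) :
    besselCoeff α n = (n + α + 1) * besselCoeff (α + 1) n := by
  have hpos : 0 < (n : ℝ) + α + 1 := by linarith [n.cast_nonneg (α := ℝ)]
  have hΓ := (Gamma_pos_of_pos hpos).ne'
  rw [besselCoeff, besselCoeff, show (n : ℝ) + (α + 1) + 1 = (n + α + 1) + 1 by ring,
    Gamma_add_one hpos.ne']
  field_simp

theorem besselCoeff_succ (hα : -1 < α) (n : ℕ) :
    besselCoeff α (n + 1) = -besselCoeff α n / ((n + 1) * (n + α + 1)) := by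
  have hpos : 0 < (n : ℝ) + α + 1 := by linarith [n.cast_nonneg (α := ℝ)]
  rw [eq_div_iff (by positivity), besselCoeff_eq_mul_besselCoeff_add_one hα n]
  linear_combination (n + α + 1) * besselCoeff_succ_mul α n

theorem summable_besselCoeff_mul_pow (hα : -1 < α) (r : ℝ) :
    Summable fun n => besselCoeff α n * r ^ n := by
  refine summable_of_ratio_norm_eventually_le (r := 1 / 2) (by norm_num) ?_
  filter_upwards [eventually_ge_atTop ⌈2 * |r|⌉₊] with n hn
  have hr : 2 * |r| ≤ n := Nat.ceil_le.mp hn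
  have hpos : 0 < ((n : ℝ) + 1) * (n + α + 1) := by
    have := n.cast_nonneg (α := ℝ)
    nlinarith
  have hratio : |r| / ((n + 1) * (n + α + 1)) ≤ 1 / 2 := by
    rw [div_le_iff₀ hpos]
    nlinarith
  have hsucc : besselCoeff α (n + 1) * r ^ (n + 1)
      = -(besselCoeff α n * r ^ n) * (r / ((n + 1) * (n + α + 1))) := by
    rw [besselCoeff_succ hα, pow_succ]
    ring
  rw [hsucc, norm_mul, norm_neg, norm_div, norm_of_nonneg hpos.le, mul_comm, norm_eq_abs r]
  exact mul_le_mul_of_nonneg_right hratio (norm_nonneg _)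

theorem hasSum_besselSeries (hα : -1 < α) (w : ℝ) :
    HasSum (fun n => besselCoeff α n * w ^ n) (besselSeries α w) :=
  (summable_besselCoeff_mul_pow hα w).hasSum

theorem hasDerivAt_besselSeries (hα : -1 < α) (w : ℝ) :
    HasDerivAt (besselSeries α) (-besselSeries (α + 1) w) w := by
  set R := |w| + 1
  have hshift : besselSeries α =
      fun v => besselCoeff α 0 + ∑' n, besselCoeff α (n + 1) * v ^ (n + 1) := by
    funext v
    rw [besselSeries, (summable_besselCoeff_mul_pow hα v).tsum_eq_zero_add, pow_zero, mul_one]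
  have hterm : ∀ n v, HasDerivAt (fun v => besselCoeff α (n + 1) * v ^ (n + 1))
      (-(besselCoeff (α + 1) n * v ^ n)) v := by
    intro n v
    refine ((hasDerivAt_pow (n + 1) v).const_mul (besselCoeff α (n + 1))).congr_deriv ?_
    rw [← neg_mul, ← besselCoeff_succ_mul, Nat.add_sub_cancel]
    push_cast
    ring
  have hbound : ∀ n, ∀ v ∈ Metric.ball (0 : ℝ) R,
      ‖-(besselCoeff (α + 1) n * v ^ n)‖ ≤ ‖besselCoeff (α + 1) n * R ^ n‖ := by
    intro n v hv
    rw [mem_ball_zero_iff, norm_eq_abs] at hv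
    rw [norm_neg, norm_mul, norm_mul, norm_pow, norm_pow, norm_eq_abs R,
      abs_of_pos (by positivity)]
    gcongr
    exact hv.le
  have hw : w ∈ Metric.ball (0 : ℝ) R := by simp [R]
  have hseries := hasDerivAt_tsum_of_isPreconnected
    (summable_besselCoeff_mul_pow (by linarith) R).norm Metric.isOpen_ball
    (convex_ball (0 : ℝ) R).isPreconnected (fun n v _ => hterm n v) hbound hw
    ((summable_nat_add_iff 1).mpr (summable_besselCoeff_mul_pow hα w)) hw
  rw [hshift, besselSeries, ← tsum_neg]
  exact hseries.const_add _

theorem besselSeries_eq_besselSeries_add_one_sub (hα : -1 < α) (w : ℝ) :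
    besselSeries α w = (α + 1) * besselSeries (α + 1) w - w * besselSeries (α + 2) w := by
  have hα₁ : -1 < α + 1 := by linarith
  have hα₂ : -1 < α + 2 := by linarith
  have hshifted : HasSum (fun n => n * besselCoeff (α + 1) n * w ^ n)
      (-(w * besselSeries (α + 2) w)) := by
    rw [← hasSum_nat_add_iff' 1]
    simp only [Finset.range_one, Finset.sum_singleton, CharP.cast_eq_zero, zero_mul, sub_zero]
    have hterm : ∀ n : ℕ, ((n + 1 : ℕ) : ℝ) * besselCoeff (α + 1) (n + 1) * w ^ (n + 1)
        = -w * (besselCoeff (α + 2) n * w ^ n) := by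
      intro n
      rw [show α + 2 = α + 1 + 1 by ring]
      push_cast
      linear_combination w ^ (n + 1) * besselCoeff_succ_mul (α + 1) n
    simpa only [hterm, neg_mul] using (hasSum_besselSeries hα₂ w).mul_left (-w)
  have hsum := ((hasSum_besselSeries hα₁ w).mul_left (α + 1)).add hshifted
  rw [← sub_eq_add_neg] at hsum
  refine HasSum.tsum_eq ?_
  have hterm : ∀ n : ℕ, besselCoeff α n * w ^ n
      = (α + 1) * (besselCoeff (α + 1) n * w ^ n) + n * besselCoeff (α + 1) n * w ^ n := by
    intro n
    rw [besselCoeff_eq_mul_besselCoeff_add_one hα]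
    ring
  simpa only [hterm] using hsum

end BesselSeries

section BesselJ

variable {α : ℝ}

theorem besselJ_eq_besselSeries (α x : ℝ) :
    besselJ α x = Gamma (α + 1) * besselSeries α ((x / 2) ^ 2) := by
  simp only [besselJ, besselSeries, besselCoeff, pow_mul]

theorem Gamma_add_two (h : α + 1 ≠ 0) : Gamma (α + 2) = (α + 1) * Gamma (α + 1) := by
  rw [← Gamma_add_one h]
  ring_nf

theorem hasDerivAt_besselJ (hα : -1 < α) (x : ℝ) :
    HasDerivAt (besselJ α) (-(x / (2 * (α + 1))) * besselJ (α + 1) x) x := by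
  have hsq : HasDerivAt (fun x : ℝ => (x / 2) ^ 2) (x / 2) x := by
    refine ((hasDerivAt_pow 2 (x / 2)).comp x ((hasDerivAt_id x).div_const 2)).congr_deriv ?_
    ring
  have h := ((hasDerivAt_besselSeries hα _).comp x hsq).const_mul (Gamma (α + 1))
  rw [show besselJ α = _ from funext (besselJ_eq_besselSeries α)]
  refine h.congr_deriv ?_
  have h₁ : α + 1 ≠ 0 := by linarith
  rw [besselJ_eq_besselSeries, show α + 1 + 1 = α + 2 by ring, Gamma_add_two h₁]
  field_simp

theorem continuous_besselJ (hα : -1 < α) : Continuous (besselJ α) :=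
  continuous_iff_continuousAt.mpr fun x => (hasDerivAt_besselJ hα x).continuousAt

theorem besselJ_eq_besselJ_add_one_sub (hα : -1 < α) (z : ℝ) :
    besselJ α z =
      besselJ (α + 1) z - z ^ 2 / (4 * (α + 1) * (α + 2)) * besselJ (α + 2) z := by
  have h₁ : α + 1 ≠ 0 := by linarith
  have h₂ : α + 2 ≠ 0 := by linarith
  rw [besselJ_eq_besselSeries, besselJ_eq_besselSeries, besselJ_eq_besselSeries,
    besselSeries_eq_besselSeries_add_one_sub hα, show α + 2 + 1 = (α + 1) + 2 by ring,
    Gamma_add_two (by linarith), show α + 1 + 1 = α + 2 by ring, Gamma_add_two h₁]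
  field_simp
  ring

theorem hasDerivAt_rpow_mul_besselJ_add_one (hα : -1 < α) (c : ℝ) {t : ℝ} (ht : 0 < t) :
    HasDerivAt (fun t => t ^ (2 * α + 2) * besselJ (α + 1) (c * t))
      (2 * (α + 1) * (t ^ (2 * α + 1) * besselJ α (c * t))) t := by
  have hpow := hasDerivAt_rpow_const (p := 2 * α + 2) (Or.inl ht.ne')
  have hJ := (hasDerivAt_besselJ (by linarith : -1 < α + 1) (c * t)).comp t
    ((hasDerivAt_id t).const_mul c)
  refine (hpow.mul hJ).congr_deriv ?_
  rw [show 2 * α + 2 - 1 = 2 * α + 1 by ring, show 2 * α + 2 = (2 * α + 1) + 1 by ring,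
    rpow_add_one ht.ne' (2 * α + 1), besselJ_eq_besselJ_add_one_sub hα,
    show α + 1 + 1 = α + 2 by ring]
  have h₁ : α + 1 ≠ 0 := by linarith
  have h₂ : α + 2 ≠ 0 := by linarith
  simp only [Function.comp_apply]
  field_simp
  ring

theorem integral_rpow_mul_besselJ_mul_besselJ (hα : -1 < α) (s x : ℝ) :
    2 * (α + 1) * (x ^ 2 - s ^ 2) *
        ∫ t in (0 : ℝ)..1, t ^ (2 * α + 1) * (besselJ α (s * t) * besselJ α (x * t)) =
      x ^ 2 * besselJ α s * besselJ (α + 1) x - s ^ 2 * besselJ (α + 1) s * besselJ α x := by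
  set P : ℝ → ℝ → ℝ := fun c t => t ^ (2 * α + 2) * besselJ (α + 1) (c * t)
  set W : ℝ → ℝ := fun t =>
    x ^ 2 * (besselJ α (s * t) * P x t) - s ^ 2 * (P s t * besselJ α (x * t))
  have hJ : ∀ c t, HasDerivAt (fun t => besselJ α (c * t))
      (-(c ^ 2 * t / (2 * (α + 1))) * besselJ (α + 1) (c * t)) t := fun c t =>
    ((hasDerivAt_besselJ hα (c * t)).comp t ((hasDerivAt_id t).const_mul c)).congr_deriv
      (by ring)
  have hW : ∀ t ∈ Ioo (0 : ℝ) 1, HasDerivAt W (2 * (α + 1) * (x ^ 2 - s ^ 2) *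
      (t ^ (2 * α + 1) * (besselJ α (s * t) * besselJ α (x * t)))) t := by
    intro t ht
    have hPs := hasDerivAt_rpow_mul_besselJ_add_one hα s ht.1
    have hPx := hasDerivAt_rpow_mul_besselJ_add_one hα x ht.1
    refine ((((hJ s t).fun_mul hPx).const_mul (x ^ 2)).fun_sub
      ((hPs.fun_mul (hJ x t)).const_mul (s ^ 2))).congr_deriv ?_
    have : α + 1 ≠ 0 := by linarith
    rw [show 2 * α + 2 = (2 * α + 1) + 1 by ring, rpow_add_one ht.1.ne' (2 * α + 1)]
    field_simp
    ring
  have hpow : Continuous fun t : ℝ => t ^ (2 * α + 2) := continuous_rpow_const (by linarith)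
  have hJα := continuous_besselJ hα
  have hJα₁ := continuous_besselJ (by linarith : -1 < α + 1)
  have hcont : ContinuousOn W (Icc 0 1) := by
    simp only [W, P]
    fun_prop
  have hint : IntervalIntegrable (fun t => 2 * (α + 1) * (x ^ 2 - s ^ 2) *
      (t ^ (2 * α + 1) * (besselJ α (s * t) * besselJ α (x * t)))) volume 0 1 := by
    refine ((intervalIntegral.intervalIntegrable_rpow' (by linarith)).mul_continuousOn
      ?_).const_mul _
    fun_prop
  rw [← intervalIntegral.integral_const_mul,
    intervalIntegral.integral_eq_sub_of_hasDerivAt_of_le zero_le_one hcont hW hint]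
  simp only [W, P, mul_one, mul_zero, one_rpow, zero_rpow (show 2 * α + 2 ≠ 0 by linarith)]
  ring

end BesselJ

theorem setIntegral_muB {α : ℝ} (hα : -1 < α) {s : Set ℝ} (hs : MeasurableSet s)
    (hs₀ : s ⊆ Ici 0) (f : ℝ → ℝ) :
    ∫ y in s, f y ∂muB α =
      ∫ y in s, 2 * π ^ (α + 1) / Gamma (α + 1) * y ^ (2 * α + 1) * f y := by
  rw [muB, setIntegral_withDensity_eq_setIntegral_toReal_smul' s (by fun_prop)
    (ae_of_all _ fun _ => ENNReal.ofReal_lt_top), Measure.restrict_restrict hs,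
    inter_eq_self_of_subset_left hs₀]
  refine setIntegral_congr_fun hs fun y hy => ?_
  have := Gamma_pos_of_pos (show 0 < α + 1 by linarith)
  have hy : 0 ≤ y := hs₀ hy
  rw [ENNReal.toReal_ofReal (by positivity), smul_eq_mul]

theorem intervalIntegral_rpow_mul_comp_mul_left {c b : ℝ} (hc : 0 < c) (hb : 0 ≤ b) (r : ℝ)
    (g : ℝ → ℝ) :
    ∫ y in (0 : ℝ)..b, y ^ r * g (c * y) =
      (c ^ (r + 1))⁻¹ * ∫ t in (0 : ℝ)..c * b, t ^ r * g t := by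
  have hpow : ∀ y ∈ uIcc 0 b, y ^ r * g (c * y) = (c ^ r)⁻¹ * ((c * y) ^ r * g (c * y)) := by
    intro y hy
    rw [uIcc_of_le hb] at hy
    have := rpow_pos_of_pos hc r
    rw [mul_rpow hc.le hy.1]
    field_simp
  rw [intervalIntegral.integral_congr hpow, intervalIntegral.integral_const_mul,
    intervalIntegral.integral_comp_mul_left (fun t => t ^ r * g t) hc.ne', mul_zero, smul_eq_mul,
    rpow_add_one hc.ne', mul_inv]
  ring

theorem setIntegral_Icc_muB_comp_mul_left {α c : ℝ} (hα : -1 < α) (hc : 0 < c) (g : ℝ → ℝ) :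
    ∫ y in Icc 0 (1 / c), g (c * y) ∂muB α =
      2 * π ^ (α + 1) / Gamma (α + 1) * (c ^ (2 * α + 1 + 1))⁻¹ *
        ∫ t in (0 : ℝ)..1, t ^ (2 * α + 1) * g t := by
  rw [setIntegral_muB hα measurableSet_Icc Icc_subset_Ici_self, integral_Icc_eq_integral_Ioc,
    ← intervalIntegral.integral_of_le (by positivity)]
  simp only [mul_assoc]
  rw [intervalIntegral.integral_const_mul,
    intervalIntegral_rpow_mul_comp_mul_left hc (by positivity), mul_one_div_cancel hc.ne']

theorem fourierBessel_normalization {α : ℝ} (hα : -1 < α) :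
    (4 * π) ^ (α + 1) * Gamma (α + 2) * (2 * π ^ (α + 1) / Gamma (α + 1)) =
      2 * (α + 1) * (2 * π) ^ (2 * α + 1 + 1) := by
  have hΓ := Gamma_pos_of_pos (show 0 < α + 1 by linarith)
  have hsq : (2 * π) ^ (2 * α + 1 + 1) = (4 * π) ^ (α + 1) * π ^ (α + 1) := by
    rw [← mul_rpow (by positivity) pi_pos.le,
      show 2 * α + 1 + 1 = (2 : ℕ) * (α + 1) by push_cast; ring, rpow_mul (by positivity),
      rpow_natCast]
    ring_nf
  rw [Gamma_add_two (by linarith), hsq]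
  field_simp

/-- The Fourier-Bessel transform of `ϑ_α j_α(2πs·)χ_{[0,1/2π]}`, for `s` a zero
of `j_{α+1}`, is `x ↦ j_α(s) x² j_{α+1}(x)/(x² − s²)`. -/
theorem fourierBessel_of_truncated_bessel
    {α : ℝ} (hα : -1/2 < α) {s : ℝ} (hs : 0 < s) (hzero : besselJ (α+1) s = 0)
    {x : ℝ} (hx : 0 ≤ x) (hxs : x ≠ s) :
    ((4*π) ^ (α+1) * Gamma (α+2)) *
        ∫ y in Set.Icc 0 (1/(2*π)), besselJ α (2*π*s*y) * besselJ α (2*π*x*y) ∂(muB α) =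
      besselJ α s * (x^2 * besselJ (α+1) x / (x^2 - s^2)) := by
  have hα₁ : -1 < α := by linarith
  have hxs₂ : x ^ 2 - s ^ 2 ≠ 0 := fun h => hxs ((sq_eq_sq₀ hx hs.le).mp (by linarith))
  have hlommel := integral_rpow_mul_besselJ_mul_besselJ hα₁ s x
  rw [hzero] at hlommel
  have hsubst := setIntegral_Icc_muB_comp_mul_left hα₁ (by positivity : 0 < 2 * π)
    (fun t => besselJ α (s * t) * besselJ α (x * t))
  have harg : ∀ c y : ℝ, 2 * π * c * y = c * (2 * π * y) := fun c y => by ring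
  simp only [harg, hsubst]
  rw [← mul_assoc, ← mul_assoc, fourierBessel_normalization hα₁]
  set I := ∫ t in (0 : ℝ)..1, t ^ (2 * α + 1) * (besselJ α (s * t) * besselJ α (x * t))
  have : α + 1 ≠ 0 := by linarith
  field_simp
  linear_combination hlommel
end
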